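/- Let G be the group presented by generators x, y and relators x², y⁵ (the free product Z/2 * Z/5). Then the elements A = xy³xy³, B = y³xy³x, and C = xyxy generate a free subgroup of G of rank 3; that is, the homomorphism from the free group of rank 3 to G sending the three free generators to A, B, C respectively is injective. -/

import Mathlib

/-- The relators `x², y⁵` of the group `⟨x, y | x², y⁵⟩ = ℤ/2 * ℤ/5`, with `x, y` the
generators `0, 1 : Fin 2`. -/
def relsZ2Z5 : Set (FreeGroup (Fin 2)) := {FreeGroup.of 0 ^ 2, FreeGroup.of 1 ^ 5}

/-!
Send `⟨x, y | x², y⁵⟩` to the free product `ℤ/2 ∗ ℤ/5` and let it act on reduced words.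
There `A = (xy³)²`, `B = (y³x)²`, `C = (xy)²`. If `a, b` are nontrivial letters from different
factors, `(ab)²` sends every reduced word not beginning with `b⁻¹a⁻¹` to one beginning with `ab`,
and `(ab)⁻²` sends every word not beginning with `ab` to one beginning with `b⁻¹a⁻¹`. The six
prefixes `xy³, y²x, y³x, xy², xy, y⁴x` are distinct, so the ping-pong lemma applies.
-/

open Pointwise

namespace Monoid.CoprodI

variable {ι : Type*} {M : ι → Type*} [∀ i, Group (M i)]

namespace Word

def startingWith (u v : Σ i, M i) : Set (Word M) := {w | ∃ t, w.toList = u :: v :: t}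

def letterInv (l : Σ i, M i) : Σ i, M i := Sigma.map id (fun _ m => m⁻¹) l

theorem letterInv_injective : Function.Injective (letterInv (M := M)) :=
  Function.injective_id.sigma_map fun _ => inv_injective

theorem disjoint_startingWith {u v u' v' : Σ i, M i} (h : (u, v) ≠ (u', v')) :
    Disjoint (startingWith u v) (startingWith u' v') := by
  rw [Set.disjoint_left]
  rintro w ⟨t, ht⟩ ⟨t', ht'⟩
  simp_all

variable [DecidableEq ι] [∀ i, DecidableEq (M i)]

theorem toList_of_smul_eq_cons {i : ι} {m : M i} (hm : m ≠ 1) {w : Word M}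
    (hw : w.fstIdx ≠ some i) : (of m • w).toList = ⟨i, m⟩ :: w.toList := by
  rw [← cons_eq_smul (h1 := hw) (h2 := hm), cons_toList]

theorem fstIdx_of_smul_eq_some {i : ι} {m : M i} (hm : m ≠ 1) {w : Word M}
    (hw : w.fstIdx ≠ some i) : (of m • w).fstIdx = some i := by
  rw [← cons_eq_smul (h1 := hw) (h2 := hm), fstIdx_cons]

theorem exists_of_smul_eq (i : ι) (w : Word M) :
    ∃ (m : M i) (t : Word M), t.fstIdx ≠ some i ∧ of m • t = w :=
  ⟨_, _, (equivPair i w).fstIdx_ne, equivPair_head_smul_equivPair_tail w⟩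

variable {i j : ι} {a : M i} {b : M j}

theorem fstIdx_mul_of_smul (hij : i ≠ j) (ha : a ≠ 1) (hb : b ≠ 1) {w : Word M}
    (hw : w ∉ startingWith ⟨j, b⁻¹⟩ ⟨i, a⁻¹⟩) : ((of a * of b) • w).fstIdx = some i := by
  obtain ⟨c, t, ht, rfl⟩ := exists_of_smul_eq j w
  rw [mul_smul, ← mul_smul (of b), ← map_mul]
  by_cases hbc : b * c = 1
  · obtain ⟨d, s, hs, rfl⟩ := exists_of_smul_eq i t
    rw [hbc, map_one, one_smul, smul_smul, ← map_mul]
    by_cases had : a * d = 1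
    · obtain rfl : c = b⁻¹ := eq_inv_of_mul_eq_one_right hbc
      obtain rfl : d = a⁻¹ := eq_inv_of_mul_eq_one_right had
      refine absurd ⟨s.toList, ?_⟩ hw
      rw [toList_of_smul_eq_cons (inv_ne_one.2 hb), toList_of_smul_eq_cons (inv_ne_one.2 ha) hs]
      rw [fstIdx_of_smul_eq_some (inv_ne_one.2 ha) hs]
      exact mt Option.some_inj.1 hij
    · exact fstIdx_of_smul_eq_some had hs
  · refine fstIdx_of_smul_eq_some ha ?_
    rw [fstIdx_of_smul_eq_some hbc ht]
    exact mt Option.some_inj.1 hij.symm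

theorem toList_mul_of_smul (hij : i ≠ j) (ha : a ≠ 1) (hb : b ≠ 1) {w : Word M}
    (hw : w.fstIdx = some i) :
    ((of a * of b) • w).toList = ⟨i, a⟩ :: ⟨j, b⟩ :: w.toList := by
  have hwj : w.fstIdx ≠ some j := by rw [hw]; exact mt Option.some_inj.1 hij
  rw [mul_smul, toList_of_smul_eq_cons ha, toList_of_smul_eq_cons hb hwj]
  rw [fstIdx_of_smul_eq_some hb hwj]
  exact mt Option.some_inj.1 hij.symm

theorem sq_mul_of_smul_compl_subset (hij : i ≠ j) (ha : a ≠ 1) (hb : b ≠ 1) :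
    (of a * of b) ^ 2 • (startingWith ⟨j, b⁻¹⟩ ⟨i, a⁻¹⟩)ᶜ ⊆ startingWith ⟨i, a⟩ ⟨j, b⟩ := by
  rintro _ ⟨w, hw, rfl⟩
  dsimp only
  rw [sq, mul_smul]
  exact ⟨_, toList_mul_of_smul hij ha hb (fstIdx_mul_of_smul hij ha hb hw)⟩

theorem startingWith_nonempty (hij : i ≠ j) (ha : a ≠ 1) (hb : b ≠ 1) :
    (startingWith ⟨i, a⟩ ⟨j, b⟩).Nonempty :=
  ⟨_, _, toList_mul_of_smul hij ha hb (fstIdx_of_smul_eq_some ha (w := empty) nofun)⟩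

end Word

open Word

-- `FreeGroup.injective_lift_of_ping_pong` needs the index type and the group in one universe.
universe u

theorem injective_lift_sq_of_ping_pong {ι κ : Type u} {M : ι → Type u} [∀ i, Group (M i)]
    [DecidableEq ι] [∀ i, DecidableEq (M i)] [Nontrivial κ] (u v : κ → Σ i, M i)
    (huv : ∀ k, (u k).1 ≠ (v k).1) (hu : ∀ k, (u k).2 ≠ 1) (hv : ∀ k, (v k).2 ≠ 1)
    (hinj : Function.Injective fun k => (u k, v k))
    (hne : ∀ k l, (u k, v k) ≠ (letterInv (v l), letterInv (u l))) :
    Function.Injective (FreeGroup.lift fun k => (of (u k).2 * of (v k).2) ^ 2) := by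
  refine FreeGroup.injective_lift_of_ping_pong (fun k => (of (u k).2 * of (v k).2) ^ 2)
    (fun k => startingWith (u k) (v k))
    (fun k => startingWith (letterInv (v k)) (letterInv (u k)))
    (fun k => startingWith_nonempty (huv k) (hu k) (hv k))
    (fun k l hkl => disjoint_startingWith (hinj.ne hkl))
    (fun k l hkl => disjoint_startingWith ?_)
    (fun k l => disjoint_startingWith (hne k l))
    (fun k => sq_mul_of_smul_compl_subset (huv k) (hu k) (hv k)) (fun k => ?_)
  · simp only [ne_eq, Prod.mk.injEq, letterInv_injective.eq_iff]
    exact fun h => hkl (hinj (Prod.ext h.2 h.1))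
  · rw [Pi.inv_apply, ← inv_pow, mul_inv_rev, ← map_inv, ← map_inv]
    have h := sq_mul_of_smul_compl_subset (huv k).symm (inv_ne_one.2 (hv k)) (inv_ne_one.2 (hu k))
    rw [inv_inv, inv_inv] at h
    exact h

end Monoid.CoprodI

namespace Z2Z5

open Monoid CoprodI

abbrev Factor (i : Fin 2) : Type := Multiplicative (ZMod (![2, 5] i))

def x : Factor 0 := Multiplicative.ofAdd 1

def y : Factor 1 := Multiplicative.ofAdd 1

def toCoprodI : PresentedGroup relsZ2Z5 →* CoprodI Factor :=
  PresentedGroup.toGroup (f := ![of x, of y]) <| by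
    rintro r (rfl | rfl) <;>
      simp only [map_pow, FreeGroup.lift_apply_of, Matrix.cons_val_zero, Matrix.cons_val_one,
        Matrix.cons_val_fin_one] <;>
      rw [← map_pow, map_eq_one_iff _ (of_injective _)] <;> decide

@[simp]
theorem toCoprodI_of_zero : toCoprodI (PresentedGroup.of 0) = of x :=
  PresentedGroup.toGroup.of _

@[simp]
theorem toCoprodI_of_one : toCoprodI (PresentedGroup.of 1) = of y :=
  PresentedGroup.toGroup.of _

theorem toCoprodI_of_one_pow (n : ℕ) : toCoprodI (PresentedGroup.of 1 ^ n) = of (y ^ n) := by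
  rw [map_pow, map_pow, toCoprodI_of_one]

def u : Fin 3 → Σ i, Factor i := ![⟨0, x⟩, ⟨1, y ^ 3⟩, ⟨0, x⟩]

def v : Fin 3 → Σ i, Factor i := ![⟨1, y ^ 3⟩, ⟨0, x⟩, ⟨1, y⟩]

end Z2Z5

/-- In `G = ⟨x, y | x², y⁵⟩ = ℤ/2 * ℤ/5`, the elements `A = xy³xy³`,
`B = y³xy³x`, `C = xyxy` generate a free subgroup of rank 3: the homomorphism from the free
group of rank 3 sending the free generators to `A, B, C` is injective. -/
theorem stmt_13 :
    Function.Injective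
      (FreeGroup.lift (fun i : Fin 3 =>
        if i = 0 then
          (PresentedGroup.of 0 : PresentedGroup relsZ2Z5) * PresentedGroup.of 1 ^ 3 *
            PresentedGroup.of 0 * PresentedGroup.of 1 ^ 3
        else if i = 1 then
          PresentedGroup.of 1 ^ 3 * PresentedGroup.of 0 *
            PresentedGroup.of 1 ^ 3 * PresentedGroup.of 0
        else
          PresentedGroup.of 0 * PresentedGroup.of 1 *
            PresentedGroup.of 0 * PresentedGroup.of 1) :
        FreeGroup (Fin 3) →* PresentedGroup relsZ2Z5) := by
  refine Function.Injective.of_comp (f := Z2Z5.toCoprodI) ?_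
  rw [← MonoidHom.coe_comp]
  convert Monoid.CoprodI.injective_lift_sq_of_ping_pong Z2Z5.u Z2Z5.v
    (by decide) (by decide) (by decide) (by decide) (by decide) using 2
  refine FreeGroup.ext_hom _ _ fun k => ?_
  -- `rfl` closes goals that differ only in the implicit factor index `(u k).1` versus `0` or `1`.
  fin_cases k <;> simp [-map_pow, Z2Z5.toCoprodI_of_one_pow, sq, mul_assoc] <;> rfl
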